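/- arXiv:2602.21260 — 8 statements merged into one kernel-verified Lean document; each statement's English description precedes it below -/
import Mathlib

section
/- For real numbers ζ, η ∈ [0,1] with ζ³ + η³ ≤ 1, the quantity (√2·cos(π(ζ³ − η³)/4) − 1)/(√2 − 1) lies in the interval [0,1]. -/
noncomputable def ffEntropy (ζ η : ℝ) : ℝ :=
  (Real.sqrt 2 * Real.cos (Real.pi * (ζ ^ 3 - η ^ 3) / 4) - 1) / (Real.sqrt 2 - 1)

theorem stmt_0 (ζ η : ℝ) (hζ : ζ ∈ Set.Icc (0:ℝ) 1) (hη : η ∈ Set.Icc (0:ℝ) 1)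
    (h : ζ ^ 3 + η ^ 3 ≤ 1) :
    ffEntropy ζ η ∈ Set.Icc (0:ℝ) 1 := by
  obtain ⟨hζ0, hζ1⟩ := hζ
  obtain ⟨hη0, hη1⟩ := hη
  have hζ3 : ζ ^ 3 ∈ Set.Icc (0:ℝ) 1 :=
    ⟨pow_nonneg hζ0 3, pow_le_one₀ hζ0 hζ1⟩
  have hη3 : η ^ 3 ∈ Set.Icc (0:ℝ) 1 :=
    ⟨pow_nonneg hη0 3, pow_le_one₀ hη0 hη1⟩
  set x := ζ ^ 3 - η ^ 3 with hx
  have hxabs : |x| ≤ 1 := by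
    rw [abs_le]; constructor <;> [linarith [hζ3.1, hη3.2]; linarith [hζ3.2, hη3.1]]
  have hpi : (0:ℝ) < Real.pi := Real.pi_pos
  have habs : |Real.pi * x / 4| ≤ Real.pi / 4 := by
    rw [abs_div, abs_mul, abs_of_pos hpi]
    have : |(4:ℝ)| = 4 := by norm_num
    rw [this]
    have := mul_le_mul_of_nonneg_left hxabs hpi.le
    have h4 : Real.pi * |x| / 4 ≤ Real.pi / 4 := by gcongr <;> linarith
    simpa using h4
  have hcos : Real.sqrt 2 / 2 ≤ Real.cos (Real.pi * x / 4) := by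
    rw [← Real.cos_pi_div_four, ← Real.cos_abs (Real.pi * x / 4)]
    exact Real.cos_le_cos_of_nonneg_of_le_pi (abs_nonneg _)
      (by linarith [Real.pi_pos]) habs
  have hcos1 : Real.cos (Real.pi * x / 4) ≤ 1 := Real.cos_le_one _
  have hs2 : (1:ℝ) < Real.sqrt 2 := by
    rw [show (1:ℝ) = Real.sqrt 1 from (Real.sqrt_one).symm]
    exact Real.sqrt_lt_sqrt (by norm_num) (by norm_num)
  have hs2pos : (0:ℝ) < Real.sqrt 2 - 1 := by linarith
  have hsq : Real.sqrt 2 * Real.sqrt 2 = 2 := Real.mul_self_sqrt (by norm_num)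
  have hlow : 0 ≤ Real.sqrt 2 * Real.cos (Real.pi * x / 4) - 1 := by
    have := mul_le_mul_of_nonneg_left hcos (by positivity : (0:ℝ) ≤ Real.sqrt 2)
    nlinarith
  have hhigh : Real.sqrt 2 * Real.cos (Real.pi * x / 4) - 1 ≤ Real.sqrt 2 - 1 := by
    nlinarith
  unfold ffEntropy
  rw [← hx]
  constructor
  · exact div_nonneg hlow hs2pos.le
  · rw [div_le_one hs2pos]; linarith
end

section
/- For ζ, η ∈ [0,1] with ζ³ + η³ ≤ 1, the pointwise Fermatean fuzzy entropy E(ζ, η) = (√2·cos(π(ζ³ − η³)/4) − 1)/(√2 − 1) equals 0 if and only if (ζ, η) = (1, 0) or (ζ, η) = (0, 1). -/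
lemma aux_cos (d : ℝ) (hd1 : -1 ≤ d) (hd2 : d ≤ 1) :
    Real.sqrt 2 * Real.cos (Real.pi * d / 4) = 1 ↔ d = 1 ∨ d = -1 := by
  have hs2 : Real.sqrt 2 > 0 := by positivity
  have hcos4 : Real.cos (Real.pi / 4) = Real.sqrt 2 / 2 := Real.cos_pi_div_four
  have hpi := Real.pi_pos
  constructor
  · intro h
    have hc : Real.cos (Real.pi * d / 4) = Real.sqrt 2 / 2 := by
      have h2 : (Real.sqrt 2) ^ 2 = 2 := Real.sq_sqrt (by norm_num)
      field_simp at h ⊢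
      nlinarith [h, hs2]
    have habs : Real.cos (|Real.pi * d / 4|) = Real.cos (Real.pi / 4) := by
      rw [Real.cos_abs, hc, hcos4]
    have hmem1 : |Real.pi * d / 4| ∈ Set.Icc 0 Real.pi := by
      constructor
      · exact abs_nonneg _
      · rw [abs_div, abs_mul, abs_of_pos hpi]
        rw [div_le_iff₀ (by norm_num : (0:ℝ) < |(4:ℝ)|)]
        have : |d| ≤ 1 := abs_le.mpr ⟨hd1, hd2⟩
        have : |(4:ℝ)| = 4 := by norm_num
        nlinarith [abs_le.mpr ⟨hd1, hd2⟩, hpi]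
    have hmem2 : Real.pi / 4 ∈ Set.Icc 0 Real.pi := by
      constructor <;> nlinarith
    have heq := Real.injOn_cos hmem1 hmem2 habs
    have : |d| = 1 := by
      rw [abs_div, abs_mul, abs_of_pos hpi] at heq
      have h4 : |(4:ℝ)| = 4 := by norm_num
      rw [h4] at heq
      have : Real.pi * |d| = Real.pi := by linarith [mul_comm Real.pi (|d|)] <;> nlinarith
      nlinarith
    rcases abs_eq (by norm_num : (0:ℝ) ≤ 1) |>.mp this with h1 | h1
    · exact Or.inl h1
    · exact Or.inr h1
  · rintro (rfl | rfl)
    · rw [mul_one, hcos4]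
      have h2 : (Real.sqrt 2) ^ 2 = 2 := Real.sq_sqrt (by norm_num)
      nlinarith
    · rw [show Real.pi * (-1) / 4 = -(Real.pi / 4) by ring, Real.cos_neg, hcos4]
      have h2 : (Real.sqrt 2) ^ 2 = 2 := Real.sq_sqrt (by norm_num)
      nlinarith

theorem stmt_1 (ζ η : ℝ) (hζ : ζ ∈ Set.Icc (0:ℝ) 1) (hη : η ∈ Set.Icc (0:ℝ) 1)
    (h : ζ ^ 3 + η ^ 3 ≤ 1) :
    ffEntropy ζ η = 0 ↔ ((ζ = 1 ∧ η = 0) ∨ (ζ = 0 ∧ η = 1)) := by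
  obtain ⟨hζ0, hζ1⟩ := hζ
  obtain ⟨hη0, hη1⟩ := hη
  have hden : Real.sqrt 2 - 1 ≠ 0 := by
    have : Real.sqrt 2 > 1 := by
      have := Real.sqrt_lt_sqrt (by norm_num : (0:ℝ) ≤ 1) (by norm_num : (1:ℝ) < 2)
      simpa using this
    linarith
  have hζ3 : ζ ^ 3 ≤ 1 := pow_le_one₀ hζ0 hζ1
  have hη3 : η ^ 3 ≤ 1 := pow_le_one₀ hη0 hη1
  have hζ3' : 0 ≤ ζ ^ 3 := by positivity
  have hη3' : 0 ≤ η ^ 3 := by positivity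
  have key := aux_cos (ζ ^ 3 - η ^ 3) (by linarith) (by linarith)
  unfold ffEntropy
  rw [div_eq_zero_iff]
  constructor
  · rintro (h0 | h0)
    · have h1 : Real.sqrt 2 * Real.cos (Real.pi * (ζ ^ 3 - η ^ 3) / 4) = 1 := by linarith
      rcases key.mp h1 with hd | hd
      · left
        have hζe : ζ ^ 3 = 1 := by nlinarith
        have hηe : η ^ 3 = 0 := by nlinarith
        constructor
        · nlinarith [sq_nonneg (ζ - 1), sq_nonneg (ζ + 1)]
        · exact pow_eq_zero_iff (by norm_num) |>.mp hηe
      · right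
        have hηe : η ^ 3 = 1 := by nlinarith
        have hζe : ζ ^ 3 = 0 := by nlinarith
        constructor
        · exact pow_eq_zero_iff (by norm_num) |>.mp hζe
        · nlinarith [sq_nonneg (η - 1), sq_nonneg (η + 1)]
    · exact absurd h0 hden
  · rintro (⟨rfl, rfl⟩ | ⟨rfl, rfl⟩)
    · left
      have := key.mpr (Or.inl (by norm_num))
      linarith
    · left
      have := key.mpr (Or.inr (by norm_num))
      linarith
end

section
/- Let F = (ζ_F, η_F) and G = (ζ_G, η_G) be Fermatean fuzzy values with ζ_G ≤ η_G, ζ_F ≤ ζ_G and η_F ≥ η_G. Then the pointwise entropies satisfy E(ζ_F, η_F) ≤ E(ζ_G, η_G), where E(ζ, η) = (√2·cos(π(ζ³ − η³)/4) − 1)/(√2 − 1). -/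
theorem stmt_5 (ζF ηF ζG ηG : ℝ)
    (hζF : ζF ∈ Set.Icc (0:ℝ) 1) (hηF : ηF ∈ Set.Icc (0:ℝ) 1) (hF : ζF ^ 3 + ηF ^ 3 ≤ 1)
    (hζG : ζG ∈ Set.Icc (0:ℝ) 1) (hηG : ηG ∈ Set.Icc (0:ℝ) 1) (hG : ζG ^ 3 + ηG ^ 3 ≤ 1)
    (h1 : ζG ≤ ηG) (h2 : ζF ≤ ζG) (h3 : ηG ≤ ηF) :
    ffEntropy ζF ηF ≤ ffEntropy ζG ηG := by
  obtain ⟨hζF0, hζF1⟩ := hζF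
  obtain ⟨hηF0, hηF1⟩ := hηF
  obtain ⟨hζG0, hζG1⟩ := hζG
  obtain ⟨hηG0, hηG1⟩ := hηG
  set xF := ζF ^ 3 - ηF ^ 3 with hxF
  set xG := ζG ^ 3 - ηG ^ 3 with hxG
  have hle : xF ≤ xG := by
    have h2' : ζF ^ 3 ≤ ζG ^ 3 := pow_le_pow_left₀ hζF0 h2 3
    have h3' : ηG ^ 3 ≤ ηF ^ 3 := pow_le_pow_left₀ hηG0 h3 3
    simp [hxF, hxG]; linarith
  have hxG0 : xG ≤ 0 := by
    have : ζG ^ 3 ≤ ηG ^ 3 := pow_le_pow_left₀ hζG0 h1 3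
    simp [hxG]; linarith
  have hxFm1 : (-1 : ℝ) ≤ xF := by
    have : ηF ^ 3 ≤ 1 := by calc ηF^3 ≤ 1^3 := pow_le_pow_left₀ hηF0 hηF1 3
                               _ = 1 := one_pow 3
    have : (0:ℝ) ≤ ζF ^ 3 := by positivity
    simp [hxF]; linarith
  have hpi := Real.pi_pos
  have hcos : Real.cos (Real.pi * xF / 4) ≤ Real.cos (Real.pi * xG / 4) := by
    have e1 : Real.cos (Real.pi * xF / 4) = Real.cos (-(Real.pi * xF / 4)) :=
      (Real.cos_neg _).symm
    have e2 : Real.cos (Real.pi * xG / 4) = Real.cos (-(Real.pi * xG / 4)) :=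
      (Real.cos_neg _).symm
    rw [e1, e2]
    apply Real.cos_le_cos_of_nonneg_of_le_pi
    · nlinarith
    · nlinarith [Real.pi_le_four]
    · nlinarith
  have hs : (0:ℝ) < Real.sqrt 2 - 1 := by
    nlinarith [Real.sq_sqrt (by norm_num : (2:ℝ) ≥ 0), Real.sqrt_nonneg 2]
  have hs2 : (0:ℝ) ≤ Real.sqrt 2 := Real.sqrt_nonneg 2
  unfold ffEntropy
  have hnum : Real.sqrt 2 * Real.cos (Real.pi * xF / 4) - 1 ≤
      Real.sqrt 2 * Real.cos (Real.pi * xG / 4) - 1 := by nlinarith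
  exact div_le_div_of_nonneg_right hnum hs.le
end

section
/- Let F = (ζ_F, η_F) and G = (ζ_G, η_G) be Fermatean fuzzy values with ζ_G ≥ η_G, ζ_F ≥ ζ_G and η_F ≤ η_G. Then the pointwise entropies satisfy E(ζ_F, η_F) ≤ E(ζ_G, η_G), where E(ζ, η) = (√2·cos(π(ζ³ − η³)/4) − 1)/(√2 − 1). -/
theorem stmt_6 (ζF ηF ζG ηG : ℝ)
    (hζF : ζF ∈ Set.Icc (0:ℝ) 1) (hηF : ηF ∈ Set.Icc (0:ℝ) 1) (hF : ζF ^ 3 + ηF ^ 3 ≤ 1)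
    (hζG : ζG ∈ Set.Icc (0:ℝ) 1) (hηG : ηG ∈ Set.Icc (0:ℝ) 1) (hG : ζG ^ 3 + ηG ^ 3 ≤ 1)
    (h1 : ηG ≤ ζG) (h2 : ζG ≤ ζF) (h3 : ηF ≤ ηG) :
    ffEntropy ζF ηF ≤ ffEntropy ζG ηG := by
  unfold ffEntropy
  have hpi := Real.pi_pos
  have hs : (1:ℝ) < Real.sqrt 2 := by
    have : (1:ℝ) = Real.sqrt 1 := (Real.sqrt_one).symm
    rw [this]
    exact Real.sqrt_lt_sqrt (by norm_num) (by norm_num)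
  have hden : 0 < Real.sqrt 2 - 1 := by linarith
  have h0F : ζF ∈ Set.Icc (0:ℝ) 1 := hζF
  -- key bounds on cubes
  have hcG : ζG ^ 3 - ηG ^ 3 ≤ ζF ^ 3 - ηF ^ 3 := by
    have := pow_le_pow_left₀ hζG.1 h2 3
    have := pow_le_pow_left₀ hηF.1 h3 3
    nlinarith
  have hGnn : 0 ≤ ζG ^ 3 - ηG ^ 3 := by
    have := pow_le_pow_left₀ hηG.1 h1 3
    linarith
  have hF1 : ζF ^ 3 - ηF ^ 3 ≤ 1 := by
    have h1' : ζF ^ 3 ≤ 1 := pow_le_one₀ hζF.1 hζF.2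
    have h2' : 0 ≤ ηF ^ 3 := pow_nonneg hηF.1 3
    linarith
  have hcos : Real.cos (Real.pi * (ζF ^ 3 - ηF ^ 3) / 4)
      ≤ Real.cos (Real.pi * (ζG ^ 3 - ηG ^ 3) / 4) := by
    apply Real.cos_le_cos_of_nonneg_of_le_pi
    · positivity
    · nlinarith
    · nlinarith
  have hsqrt : 0 < Real.sqrt 2 := by linarith
  gcongr
end

section
/- The averaged Fermatean fuzzy entropy E(F) = (1/n)·Σᵢ (√2·cos(π(ζᵢ³ − ηᵢ³)/4) − 1)/(√2 − 1) equals 0 if and only if for every i, either (ζᵢ, ηᵢ) = (1, 0) or (ζᵢ, ηᵢ) = (0, 1). -/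
lemma sqrt2_gt_one : (1:ℝ) < Real.sqrt 2 := by
  have : (1:ℝ) = Real.sqrt 1 := (Real.sqrt_one).symm
  rw [this]
  exact Real.sqrt_lt_sqrt (by norm_num) (by norm_num)

lemma cos_ge (x : ℝ) (hx : |x| ≤ 1) :
    Real.sqrt 2 / 2 ≤ Real.cos (Real.pi * x / 4) := by
  have hpi := Real.pi_pos
  have h1 : Real.cos (Real.pi * x / 4) = Real.cos (|Real.pi * x / 4|) := by
    rw [Real.cos_abs]
  rw [h1, ← Real.cos_pi_div_four]
  have habs : |Real.pi * x / 4| ≤ Real.pi / 4 := by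
    rw [abs_div, abs_mul, abs_of_pos hpi]
    have : Real.pi * |x| ≤ Real.pi * 1 := by
      exact mul_le_mul_of_nonneg_left hx hpi.le
    simp only [abs_of_pos (show (0:ℝ) < 4 by norm_num)]
    linarith
  apply Real.cos_le_cos_of_nonneg_of_le_pi (abs_nonneg _) ?_ habs
  linarith [Real.pi_pos]

lemma cos_eq_iff (x : ℝ) (hx : |x| ≤ 1) :
    Real.cos (Real.pi * x / 4) = Real.sqrt 2 / 2 ↔ x = 1 ∨ x = -1 := by
  have hpi := Real.pi_pos
  constructor
  · intro hc
    have h1 : Real.cos (|Real.pi * x / 4|) = Real.cos (Real.pi / 4) := by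
      rw [Real.cos_abs, hc, Real.cos_pi_div_four]
    have habs : |Real.pi * x / 4| = Real.pi / 4 := by
      apply Real.injOn_cos ⟨abs_nonneg _, ?_⟩ ⟨by positivity, by linarith⟩ h1
      rw [abs_div, abs_mul, abs_of_pos hpi]
      have : Real.pi * |x| ≤ Real.pi * 1 := mul_le_mul_of_nonneg_left hx hpi.le
      simp only [abs_of_pos (show (0:ℝ) < 4 by norm_num)]
      linarith
    have : |x| = 1 := by
      rw [abs_div, abs_mul, abs_of_pos hpi, abs_of_pos (show (0:ℝ) < 4 by norm_num)] at habs
      have h4 : Real.pi * |x| = Real.pi * 1 := by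
        rw [mul_one]; linarith
      exact mul_left_cancel₀ hpi.ne' h4
    exact (abs_eq (by norm_num : (0:ℝ) ≤ 1)).mp this
  · rintro (rfl | rfl)
    · rw [mul_one, Real.cos_pi_div_four]
    · rw [mul_neg_one]
      rw [show -Real.pi / 4 = -(Real.pi/4) by ring, Real.cos_neg, Real.cos_pi_div_four]

lemma key (a b : ℝ) (ha : a ∈ Set.Icc (0:ℝ) 1) (hb : b ∈ Set.Icc (0:ℝ) 1) :
    0 ≤ ffEntropy a b ∧ (ffEntropy a b = 0 ↔ (a = 1 ∧ b = 0) ∨ (a = 0 ∧ b = 1)) := by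
  obtain ⟨ha0, ha1⟩ := ha
  obtain ⟨hb0, hb1⟩ := hb
  have ha3 : a ^ 3 ≤ 1 := pow_le_one₀ ha0 ha1
  have hb3 : b ^ 3 ≤ 1 := pow_le_one₀ hb0 hb1
  have ha3' : 0 ≤ a ^ 3 := pow_nonneg ha0 3
  have hb3' : 0 ≤ b ^ 3 := pow_nonneg hb0 3
  have hx : |a ^ 3 - b ^ 3| ≤ 1 := by
    rw [abs_le]
    constructor <;> linarith
  have hs2 := sqrt2_gt_one
  have hs2sq : Real.sqrt 2 ^ 2 = 2 := Real.sq_sqrt (by norm_num)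
  have hc := cos_ge _ hx
  have hnum : 0 ≤ Real.sqrt 2 * Real.cos (Real.pi * (a ^ 3 - b ^ 3) / 4) - 1 := by
    nlinarith
  have hden : 0 < Real.sqrt 2 - 1 := by linarith
  constructor
  · exact div_nonneg hnum hden.le
  constructor
  · intro h0
    have hnum0 : Real.sqrt 2 * Real.cos (Real.pi * (a ^ 3 - b ^ 3) / 4) - 1 = 0 := by
      have := div_eq_zero_iff.mp h0
      rcases this with h | h
      · exact h
      · linarith
    have hcos : Real.cos (Real.pi * (a ^ 3 - b ^ 3) / 4) = Real.sqrt 2 / 2 := by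
      have hne : Real.sqrt 2 ≠ 0 := by linarith
      field_simp
      nlinarith
    rcases (cos_eq_iff _ hx).mp hcos with h1 | h1
    · left
      have hbz3 : b ^ 3 = 0 := by linarith
      have hbz : b = 0 := by
        have := pow_eq_zero_iff (n := 3) (by norm_num) |>.mp hbz3
        exact this
      refine ⟨?_, hbz⟩
      have haa : a ^ 3 ≤ a := by nlinarith [mul_nonneg ha0 ha0, sq_nonneg (a - 1)]
      linarith
    · right
      have haz3 : a ^ 3 = 0 := by linarith
      have haz : a = 0 := pow_eq_zero_iff (n := 3) (by norm_num) |>.mp haz3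
      refine ⟨haz, ?_⟩
      have hbb : b ^ 3 ≤ b := by nlinarith [mul_nonneg hb0 hb0, sq_nonneg (b - 1)]
      linarith
  · rintro (⟨rfl, rfl⟩ | ⟨rfl, rfl⟩)
    · unfold ffEntropy
      rw [show ((1:ℝ) ^ 3 - 0 ^ 3) = 1 by norm_num, mul_one, Real.cos_pi_div_four]
      rw [div_eq_zero_iff]
      left
      nlinarith
    · unfold ffEntropy
      rw [show ((0:ℝ) ^ 3 - 1 ^ 3) = -1 by norm_num,
        show Real.pi * (-1) / 4 = -(Real.pi / 4) by ring, Real.cos_neg,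
        Real.cos_pi_div_four]
      rw [div_eq_zero_iff]
      left
      nlinarith

theorem stmt_9 (n : ℕ) (hn : 1 ≤ n) (ζ η : Fin n → ℝ)
    (hζ : ∀ i, ζ i ∈ Set.Icc (0:ℝ) 1) (hη : ∀ i, η i ∈ Set.Icc (0:ℝ) 1)
    (h : ∀ i, ζ i ^ 3 + η i ^ 3 ≤ 1) :
    (1 / (n : ℝ)) * ∑ i, ffEntropy (ζ i) (η i) = 0 ↔
      ∀ i, (ζ i = 1 ∧ η i = 0) ∨ (ζ i = 0 ∧ η i = 1) := by
  have hn0 : (n:ℝ) ≠ 0 := Nat.cast_ne_zero.mpr (by omega)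
  have hkey := fun i => key (ζ i) (η i) (hζ i) (hη i)
  rw [mul_eq_zero]
  constructor
  · rintro (h0 | h0)
    · exfalso; rw [div_eq_zero_iff] at h0; rcases h0 with h0 | h0 <;> simp_all
    · intro i
      have := (Finset.sum_eq_zero_iff_of_nonneg (fun i _ => (hkey i).1)).mp h0 i (Finset.mem_univ i)
      exact ((hkey i).2).mp this
  · intro hall
    right
    exact Finset.sum_eq_zero fun i _ => ((hkey i).2).mpr (hall i)
end

section
/- If (ζ₁, η₁) and (ζ₂, η₂) are Fermatean fuzzy values, then their product F₁ ⊗ F₂ = (ζ₁ζ₂, (η₁³ + η₂³ − η₁³η₂³)^{1/3}) is also a Fermatean fuzzy value. -/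
theorem stmt_12 (ζ₁ η₁ ζ₂ η₂ : ℝ)
    (hζ₁ : ζ₁ ∈ Set.Icc (0:ℝ) 1) (hη₁ : η₁ ∈ Set.Icc (0:ℝ) 1) (h₁ : ζ₁ ^ 3 + η₁ ^ 3 ≤ 1)
    (hζ₂ : ζ₂ ∈ Set.Icc (0:ℝ) 1) (hη₂ : η₂ ∈ Set.Icc (0:ℝ) 1) (h₂ : ζ₂ ^ 3 + η₂ ^ 3 ≤ 1) :
    ζ₁ * ζ₂ ∈ Set.Icc (0:ℝ) 1 ∧
    (η₁ ^ 3 + η₂ ^ 3 - η₁ ^ 3 * η₂ ^ 3) ^ ((1:ℝ)/3) ∈ Set.Icc (0:ℝ) 1 ∧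
    (ζ₁ * ζ₂) ^ 3 + ((η₁ ^ 3 + η₂ ^ 3 - η₁ ^ 3 * η₂ ^ 3) ^ ((1:ℝ)/3)) ^ 3 ≤ 1 := by
  obtain ⟨hz1, hz1'⟩ := hζ₁
  obtain ⟨he1, he1'⟩ := hη₁
  obtain ⟨hz2, hz2'⟩ := hζ₂
  obtain ⟨he2, he2'⟩ := hη₂
  set E := η₁ ^ 3 + η₂ ^ 3 - η₁ ^ 3 * η₂ ^ 3 with hE
  have hA0 : 0 ≤ η₁ ^ 3 := by positivity
  have hB0 : 0 ≤ η₂ ^ 3 := by positivity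
  have hA1 : η₁ ^ 3 ≤ 1 := pow_le_one₀ he1 he1'
  have hB1 : η₂ ^ 3 ≤ 1 := pow_le_one₀ he2 he2'
  have hE0 : 0 ≤ E := by nlinarith
  have hE1 : E ≤ 1 := by nlinarith
  have hcube : ((E) ^ ((1:ℝ)/3)) ^ 3 = E := by
    rw [← Real.rpow_natCast (E ^ ((1:ℝ)/3)) 3, ← Real.rpow_mul hE0]
    norm_num
  refine ⟨⟨by positivity, by nlinarith⟩, ⟨Real.rpow_nonneg hE0 _, ?_⟩, ?_⟩
  · exact Real.rpow_le_one hE0 hE1 (by norm_num)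
  · rw [hcube]
    have key : ζ₁ ^ 3 * ζ₂ ^ 3 ≤ (1 - η₁ ^ 3) * (1 - η₂ ^ 3) :=
      mul_le_mul (by linarith) (by linarith) (by positivity) (by linarith)
    nlinarith [key]
end

section
/- Let (ζᵢ, ηᵢ), i = 1,…,n, be Fermatean fuzzy values and ω₁,…,ωₙ nonnegative weights summing to 1. Then the Fermatean fuzzy weighted average FFWA = ((1 − Πᵢ (1 − ζᵢ³)^{ωᵢ})^{1/3}, Πᵢ ηᵢ^{ωᵢ}) is a Fermatean fuzzy value. -/
theorem stmt_16 (n : ℕ) (ζ η ω : Fin n → ℝ)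
    (hζ : ∀ i, ζ i ∈ Set.Icc (0:ℝ) 1) (hη : ∀ i, η i ∈ Set.Icc (0:ℝ) 1)
    (h : ∀ i, ζ i ^ 3 + η i ^ 3 ≤ 1)
    (hω : ∀ i, 0 < ω i) (hsum : ∑ i, ω i = 1) :
    (1 - ∏ i, (1 - ζ i ^ 3) ^ (ω i)) ^ ((1:ℝ)/3) ∈ Set.Icc (0:ℝ) 1 ∧
    (∏ i, (η i) ^ (ω i)) ∈ Set.Icc (0:ℝ) 1 ∧
    ((1 - ∏ i, (1 - ζ i ^ 3) ^ (ω i)) ^ ((1:ℝ)/3)) ^ 3 + (∏ i, (η i) ^ (ω i)) ^ 3 ≤ 1 := by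
  have hz0 : ∀ i, (0:ℝ) ≤ 1 - ζ i ^ 3 := by
    intro i
    have := (hζ i).2
    have h0 := (hζ i).1
    nlinarith [pow_le_one₀ h0 this (n := 3)]
  have hz1 : ∀ i, (1 - ζ i ^ 3) ≤ 1 := by
    intro i
    have h0 := (hζ i).1
    nlinarith [pow_nonneg h0 3]
  have hP0 : (0:ℝ) ≤ ∏ i, (1 - ζ i ^ 3) ^ (ω i) := by
    apply Finset.prod_nonneg
    intro i _
    exact Real.rpow_nonneg (hz0 i) _
  have hP1 : ∏ i, (1 - ζ i ^ 3) ^ (ω i) ≤ 1 := by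
    apply Finset.prod_le_one
    · intro i _; exact Real.rpow_nonneg (hz0 i) _
    · intro i _; exact Real.rpow_le_one (hz0 i) (hz1 i) (hω i).le
  have hQ0 : (0:ℝ) ≤ ∏ i, (η i) ^ (ω i) := by
    apply Finset.prod_nonneg
    intro i _
    exact Real.rpow_nonneg (hη i).1 _
  have hQ1 : ∏ i, (η i) ^ (ω i) ≤ 1 := by
    apply Finset.prod_le_one
    · intro i _; exact Real.rpow_nonneg (hη i).1 _
    · intro i _; exact Real.rpow_le_one (hη i).1 (hη i).2 (hω i).le
  have h1P : (0:ℝ) ≤ 1 - ∏ i, (1 - ζ i ^ 3) ^ (ω i) := by linarith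
  have hcube : ((1 - ∏ i, (1 - ζ i ^ 3) ^ (ω i)) ^ ((1:ℝ)/3)) ^ 3
      = 1 - ∏ i, (1 - ζ i ^ 3) ^ (ω i) := by
    rw [← Real.rpow_natCast (_ ^ ((1:ℝ)/3)) 3, ← Real.rpow_mul h1P]
    norm_num
  have hQcube : (∏ i, (η i) ^ (ω i)) ^ 3 ≤ ∏ i, (1 - ζ i ^ 3) ^ (ω i) := by
    have : (∏ i, (η i) ^ (ω i)) ^ 3 = ∏ i, (η i ^ 3) ^ (ω i) := by
      rw [← Finset.prod_pow]
      refine Finset.prod_congr rfl fun i _ => ?_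
      rw [← Real.rpow_natCast (η i ^ (ω i)) 3, ← Real.rpow_mul (hη i).1,
        mul_comm, Real.rpow_mul (hη i).1, Real.rpow_natCast]
    rw [this]
    apply Finset.prod_le_prod
    · intro i _; exact Real.rpow_nonneg (pow_nonneg (hη i).1 3) _
    · intro i _
      exact Real.rpow_le_rpow (pow_nonneg (hη i).1 3) (by linarith [h i]) (hω i).le
  refine ⟨⟨Real.rpow_nonneg h1P _, Real.rpow_le_one h1P (by linarith) (by norm_num)⟩,
    ⟨hQ0, hQ1⟩, ?_⟩
  rw [hcube]
  linarith
end

section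
/- Let (ζᵢ, ηᵢ), i = 1,…,n, be Fermatean fuzzy values and ω₁,…,ωₙ positive weights summing to 1. Then the Fermatean fuzzy weighted geometric operator FFWG = (Πᵢ ζᵢ^{ωᵢ}, (1 − Πᵢ (1 − ηᵢ³)^{ωᵢ})^{1/3}) is a Fermatean fuzzy value. -/
theorem stmt_17 (n : ℕ) (ζ η ω : Fin n → ℝ)
    (hζ : ∀ i, ζ i ∈ Set.Icc (0:ℝ) 1) (hη : ∀ i, η i ∈ Set.Icc (0:ℝ) 1)
    (h : ∀ i, ζ i ^ 3 + η i ^ 3 ≤ 1)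
    (hω : ∀ i, 0 < ω i) (hsum : ∑ i, ω i = 1) :
    (∏ i, (ζ i) ^ (ω i)) ∈ Set.Icc (0:ℝ) 1 ∧
    (1 - ∏ i, (1 - η i ^ 3) ^ (ω i)) ^ ((1:ℝ)/3) ∈ Set.Icc (0:ℝ) 1 ∧
    (∏ i, (ζ i) ^ (ω i)) ^ 3 + ((1 - ∏ i, (1 - η i ^ 3) ^ (ω i)) ^ ((1:ℝ)/3)) ^ 3 ≤ 1 := by
  have hζ0 : ∀ i, 0 ≤ ζ i := fun i => (hζ i).1
  have hη3 : ∀ i, 0 ≤ 1 - η i ^ 3 := by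
    intro i
    nlinarith [(hη i).1, (hη i).2, sq_nonneg (η i)]
  have hη3' : ∀ i, 1 - η i ^ 3 ≤ 1 := by
    intro i; nlinarith [pow_nonneg (hη i).1 3]
  have hA0 : 0 ≤ ∏ i, (ζ i) ^ (ω i) :=
    Finset.prod_nonneg fun i _ => Real.rpow_nonneg (hζ0 i) _
  have hA1 : ∏ i, (ζ i) ^ (ω i) ≤ 1 :=
    Finset.prod_le_one (fun i _ => Real.rpow_nonneg (hζ0 i) _)
      (fun i _ => Real.rpow_le_one (hζ0 i) (hζ i).2 (hω i).le)
  have hP0 : 0 ≤ ∏ i, (1 - η i ^ 3) ^ (ω i) :=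
    Finset.prod_nonneg fun i _ => Real.rpow_nonneg (hη3 i) _
  have hP1 : ∏ i, (1 - η i ^ 3) ^ (ω i) ≤ 1 :=
    Finset.prod_le_one (fun i _ => Real.rpow_nonneg (hη3 i) _)
      (fun i _ => Real.rpow_le_one (hη3 i) (hη3' i) (hω i).le)
  have h1P0 : 0 ≤ 1 - ∏ i, (1 - η i ^ 3) ^ (ω i) := by linarith
  have h1P1 : 1 - ∏ i, (1 - η i ^ 3) ^ (ω i) ≤ 1 := by linarith
  have hcube : ((1 - ∏ i, (1 - η i ^ 3) ^ (ω i)) ^ ((1:ℝ)/3)) ^ 3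
      = 1 - ∏ i, (1 - η i ^ 3) ^ (ω i) := by
    rw [← Real.rpow_natCast (((1 - ∏ i, (1 - η i ^ 3) ^ (ω i)) ^ ((1:ℝ)/3))) 3,
      ← Real.rpow_mul h1P0]
    norm_num
  have hA3 : (∏ i, (ζ i) ^ (ω i)) ^ 3 ≤ ∏ i, (1 - η i ^ 3) ^ (ω i) := by
    have : (∏ i, (ζ i) ^ (ω i)) ^ 3 = ∏ i, (ζ i ^ 3) ^ (ω i) := by
      rw [← Finset.prod_pow]
      refine Finset.prod_congr rfl fun i _ => ?_
      rw [← Real.rpow_natCast ((ζ i) ^ (ω i)) 3, ← Real.rpow_mul (hζ0 i),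
        ← Real.rpow_natCast (ζ i) 3, ← Real.rpow_mul (hζ0 i)]
      ring_nf
    rw [this]
    refine Finset.prod_le_prod (fun i _ => Real.rpow_nonneg (pow_nonneg (hζ0 i) 3) _)
      (fun i _ => Real.rpow_le_rpow (pow_nonneg (hζ0 i) 3) ?_ (hω i).le)
    nlinarith [pow_nonneg (hη i).1 3, h i]
  refine ⟨⟨hA0, hA1⟩, ⟨Real.rpow_nonneg h1P0 _, Real.rpow_le_one h1P0 h1P1 (by norm_num)⟩, ?_⟩
  rw [hcube]
  linarith
end
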